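/- arXiv:2306.14183 — 3 statements merged into one kernel-verified Lean document; each statement's English description precedes it below -/
import Mathlib

section
/- Let (V₁, V₂) be a commuting pair of C₀-semigroups of isometries on a complex Hilbert space H. Then the pair (V₁, V₂) is completely nonunitary (there is no nonzero closed subspace reducing both V₁ and V₂ on which both restrict to unitary semigroups) if and only if the product semigroup V = (V_{1,t} V_{2,t})_{t ≥ 0} is a completely nonunitary semigroup of isometries. -/
open MeasureTheory ContinuousLinearMap
open scoped ENNReal NNReal InnerProductSpace ComplexInnerProductSpace

noncomputable section

section SemigroupDefs

variable {G : Type} [NormedAddCommGroup G] [InnerProductSpace ℂ G] [CompleteSpace G]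

/-- A (C₀-) strongly continuous one-parameter semigroup of bounded operators. -/
def IsC0Semigroup (V : ℝ≥0 → G →L[ℂ] G) : Prop :=
  V 0 = 1 ∧ (∀ s t : ℝ≥0, V (s + t) = V s ∘L V t) ∧ ∀ x : G, Continuous fun t : ℝ≥0 => V t x

/-- A C₀-semigroup of isometries. -/
def IsIsometrySemigroup (V : ℝ≥0 → G →L[ℂ] G) : Prop :=
  IsC0Semigroup V ∧ ∀ (t : ℝ≥0) (x : G), ‖V t x‖ = ‖x‖

/-- The closed subspace `L` reduces the semigroup `V`: it is invariant under every `V t`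
and every `(V t)*`. -/
def ReducedBy (V : ℝ≥0 → G →L[ℂ] G) (L : Submodule ℂ G) : Prop :=
  (∀ t : ℝ≥0, ∀ x ∈ L, V t x ∈ L) ∧ ∀ t : ℝ≥0, ∀ x ∈ L, adjoint (V t) x ∈ L

/-- `T` restricts to a unitary operator on the subspace `L`. -/
def RestrictsToUnitaryOn (T : G →L[ℂ] G) (L : Submodule ℂ G) : Prop :=
  (∀ x ∈ L, T x ∈ L) ∧ (∀ x ∈ L, ‖T x‖ = ‖x‖) ∧ ∀ y ∈ L, ∃ x ∈ L, T x = y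

/-- Every `V t` restricts to a unitary operator on the subspace `L`. -/
def IsUnitarySemigroupOn (V : ℝ≥0 → G →L[ℂ] G) (L : Submodule ℂ G) : Prop :=
  ∀ t : ℝ≥0, RestrictsToUnitaryOn (V t) L

/-- A unitary C₀-semigroup: every `V t` is a surjective isometry. -/
def IsUnitarySemigroup (V : ℝ≥0 → G →L[ℂ] G) : Prop :=
  IsC0Semigroup V ∧ ∀ t : ℝ≥0, (∀ x : G, ‖V t x‖ = ‖x‖) ∧ Function.Surjective (V t)

/-- `V` is completely nonunitary on the subspace `K`: there is no nonzero closed subspace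
of `K` reducing `V` on which every `V t` restricts to a unitary. -/
def IsCnuOn (V : ℝ≥0 → G →L[ℂ] G) (K : Submodule ℂ G) : Prop :=
  ∀ L : Submodule ℂ G, IsClosed (L : Set G) → L ≤ K → ReducedBy V L →
    IsUnitarySemigroupOn V L → L = ⊥

/-- A completely nonunitary semigroup. -/
def IsCnu (V : ℝ≥0 → G →L[ℂ] G) : Prop := IsCnuOn V ⊤

/-- Two semigroups commute. -/
def SgCommute (V1 V2 : ℝ≥0 → G →L[ℂ] G) : Prop :=
  ∀ t s : ℝ≥0, V1 t ∘L V2 s = V2 s ∘L V1 t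

/-- Two semigroups doubly commute. -/
def SgDoublyCommute (V1 V2 : ℝ≥0 → G →L[ℂ] G) : Prop :=
  SgCommute V1 V2 ∧ ∀ t s : ℝ≥0, V1 t ∘L adjoint (V2 s) = adjoint (V2 s) ∘L V1 t

/-- A completely nonunitary pair of semigroups: no nonzero closed subspace reduces both
semigroups in such a way that both restrict to unitary semigroups. -/
def IsCnuPair (V1 V2 : ℝ≥0 → G →L[ℂ] G) : Prop :=
  ∀ L : Submodule ℂ G, IsClosed (L : Set G) → ReducedBy V1 L → ReducedBy V2 L →
    IsUnitarySemigroupOn V1 L → IsUnitarySemigroupOn V2 L → L = ⊥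

/-- A strongly continuous one-parameter unitary group. -/
def IsUnitaryGroup (U : ℝ → G →L[ℂ] G) : Prop :=
  U 0 = 1 ∧ (∀ s t : ℝ, U (s + t) = U s ∘L U t) ∧
  (∀ (t : ℝ) (x : G), ‖U t x‖ = ‖x‖) ∧ (∀ t : ℝ, Function.Surjective (U t)) ∧
  ∀ x : G, Continuous fun t : ℝ => U t x

/-- Two subspaces are mutually orthogonal. -/
def OrthoSubspaces (A B : Submodule ℂ G) : Prop :=
  ∀ x ∈ A, ∀ y ∈ B, ⟪x, y⟫_ℂ = 0

end SemigroupDefs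


namespace CnuProductAux

variable {H : Type} [NormedAddCommGroup H] [InnerProductSpace ℂ H] [CompleteSpace H]

/-- For an isometry `T`, the adjoint is a left inverse. -/
lemma adjoint_apply_apply {T : H →L[ℂ] H} (hT : ∀ x, ‖T x‖ = ‖x‖) (x : H) :
    adjoint T (T x) = x := by
  refine ext_inner_right ℂ fun y => ?_
  rw [ContinuousLinearMap.adjoint_inner_left]
  exact (LinearMap.norm_map_iff_inner_map_map T).mp hT x y

/-- The adjoint of an isometry is a contraction. -/
lemma norm_adjoint_apply_le {T : H →L[ℂ] H} (hT : ∀ x, ‖T x‖ = ‖x‖) (x : H) :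
    ‖adjoint T x‖ ≤ ‖x‖ := by
  have h1 : ‖T‖ ≤ 1 := T.opNorm_le_bound zero_le_one (by simp [hT])
  calc ‖adjoint T x‖ ≤ ‖adjoint T‖ * ‖x‖ := (adjoint T).le_opNorm x
    _ = ‖T‖ * ‖x‖ := by rw [adjoint.norm_map]
    _ ≤ ‖x‖ := by nlinarith [norm_nonneg x]

/-- If the adjoint of an isometry preserves the norm of `x`, then `x` lies in the range. -/
lemma fix_of_norm_adjoint {T : H →L[ℂ] H} (hT : ∀ x, ‖T x‖ = ‖x‖) {x : H}
    (hx : ‖adjoint T x‖ = ‖x‖) : T (adjoint T x) = x := by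
  have hip : ∀ a b : H, ⟪T a, T b⟫_ℂ = ⟪a, b⟫_ℂ :=
    (LinearMap.norm_map_iff_inner_map_map T).mp hT
  have key : ⟪T (adjoint T x) - x, T (adjoint T x) - x⟫_ℂ = 0 := by
    rw [inner_sub_left, inner_sub_right, inner_sub_right, hip]
    have h1 : ⟪T (adjoint T x), x⟫_ℂ = ⟪adjoint T x, adjoint T x⟫_ℂ := by
      rw [ContinuousLinearMap.adjoint_inner_right]
    have h2 : ⟪x, T (adjoint T x)⟫_ℂ = ⟪adjoint T x, adjoint T x⟫_ℂ := by
      rw [← ContinuousLinearMap.adjoint_inner_left]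
    rw [h1, h2]
    have h3 : ⟪adjoint T x, adjoint T x⟫_ℂ = (‖adjoint T x‖ : ℂ) ^ 2 := by
      rw [inner_self_eq_norm_sq_to_K]; norm_cast
    have h4 : ⟪x, x⟫_ℂ = (‖x‖ : ℂ) ^ 2 := by rw [inner_self_eq_norm_sq_to_K]; norm_cast
    rw [h3, h4, hx]
    ring
  exact sub_eq_zero.mp (inner_self_eq_zero.mp key)

lemma comm_apply {V1 V2 : ℝ≥0 → H →L[ℂ] H} (hc : SgCommute V1 V2) (t s : ℝ≥0) (x : H) :
    V1 t (V2 s x) = V2 s (V1 t x) := by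
  have := DFunLike.congr_fun (hc t s) x
  simpa using this

lemma sg_apply {V : ℝ≥0 → H →L[ℂ] H} (hV : IsC0Semigroup V) (s t : ℝ≥0) (x : H) :
    V (s + t) x = V s (V t x) := by
  rw [hV.2.1 s t]; rfl

/-- The joint unitary subspace: intersection of the ranges of all `V1 s ∘ V2 t`. -/
def jointRange (V1 V2 : ℝ≥0 → H →L[ℂ] H) : Submodule ℂ H where
  carrier := {x | ∀ s t : ℝ≥0, ∃ y, V1 s (V2 t y) = x}
  zero_mem' := fun s t => ⟨0, by simp⟩
  add_mem' := by
    rintro a b ha hb s t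
    obtain ⟨y, hy⟩ := ha s t
    obtain ⟨z, hz⟩ := hb s t
    exact ⟨y + z, by rw [map_add, map_add, hy, hz]⟩
  smul_mem' := by
    rintro c a ha s t
    obtain ⟨y, hy⟩ := ha s t
    exact ⟨c • y, by rw [_root_.map_smul, _root_.map_smul, hy]⟩

lemma mem_jointRange {V1 V2 : ℝ≥0 → H →L[ℂ] H} {x : H} :
    x ∈ jointRange V1 V2 ↔ ∀ s t : ℝ≥0, ∃ y, V1 s (V2 t y) = x := Iff.rfl

lemma jointRange_comm {V1 V2 : ℝ≥0 → H →L[ℂ] H} (hc : SgCommute V1 V2) :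
    jointRange V2 V1 = jointRange V1 V2 := by
  ext x
  constructor
  · intro hx s t
    obtain ⟨y, hy⟩ := hx t s
    exact ⟨y, by rw [comm_apply hc, hy]⟩
  · intro hx s t
    obtain ⟨y, hy⟩ := hx t s
    exact ⟨y, by rw [← comm_apply hc, hy]⟩

lemma jointRange_isClosed {V1 V2 : ℝ≥0 → H →L[ℂ] H}
    (h1 : IsIsometrySemigroup V1) (h2 : IsIsometrySemigroup V2) :
    IsClosed ((jointRange V1 V2 : Submodule ℂ H) : Set H) := by
  have hset : ((jointRange V1 V2 : Submodule ℂ H) : Set H) =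
      ⋂ s : ℝ≥0, ⋂ t : ℝ≥0,
        {x : H | V1 s (V2 t (adjoint (V2 t) (adjoint (V1 s) x))) = x} := by
    ext x
    simp only [Set.mem_iInter, Set.mem_setOf_eq, SetLike.mem_coe, mem_jointRange]
    constructor
    · intro hx s t
      obtain ⟨y, hy⟩ := hx s t
      have e1 : adjoint (V1 s) x = V2 t y := by
        rw [← hy, adjoint_apply_apply (h1.2 s)]
      rw [e1, adjoint_apply_apply (h2.2 t), hy]
    · intro hx s t
      exact ⟨adjoint (V2 t) (adjoint (V1 s) x), hx s t⟩
  rw [hset]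
  refine isClosed_iInter fun s => isClosed_iInter fun t => isClosed_eq ?_ continuous_id
  exact (V1 s).continuous.comp ((V2 t).continuous.comp
    ((adjoint (V2 t)).continuous.comp (adjoint (V1 s)).continuous))

lemma jointRange_map_mem {V1 V2 : ℝ≥0 → H →L[ℂ] H}
    (h1 : IsIsometrySemigroup V1) (h2 : IsIsometrySemigroup V2) (hc : SgCommute V1 V2)
    (u : ℝ≥0) {x : H} (hx : x ∈ jointRange V1 V2) : V1 u x ∈ jointRange V1 V2 := by
  intro s t
  rcases le_total u s with hus | hsu
  · obtain ⟨y, hy⟩ := hx (s - u) t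
    refine ⟨y, ?_⟩
    rw [← hy, ← sg_apply h1.1, add_tsub_cancel_of_le hus]
  · obtain ⟨y, hy⟩ := hx 0 t
    have hy' : V2 t y = x := by rw [← hy, h1.1.1]; rfl
    refine ⟨V1 (u - s) y, ?_⟩
    rw [← comm_apply hc, ← sg_apply h1.1, add_tsub_cancel_of_le hsu, hy']

lemma jointRange_adjoint_mem {V1 V2 : ℝ≥0 → H →L[ℂ] H}
    (h1 : IsIsometrySemigroup V1) (h2 : IsIsometrySemigroup V2) (hc : SgCommute V1 V2)
    (u : ℝ≥0) {x : H} (hx : x ∈ jointRange V1 V2) :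
    adjoint (V1 u) x ∈ jointRange V1 V2 := by
  intro s t
  obtain ⟨y, hy⟩ := hx (u + s) t
  refine ⟨y, ?_⟩
  have : x = V1 u (V1 s (V2 t y)) := by rw [← sg_apply h1.1, hy]
  rw [this, adjoint_apply_apply (h1.2 u)]

lemma jointRange_unitaryOn {V1 V2 : ℝ≥0 → H →L[ℂ] H}
    (h1 : IsIsometrySemigroup V1) (h2 : IsIsometrySemigroup V2) (hc : SgCommute V1 V2) :
    IsUnitarySemigroupOn V1 (jointRange V1 V2) := by
  intro u
  refine ⟨fun x hx => jointRange_map_mem h1 h2 hc u hx, fun x _ => h1.2 u x, ?_⟩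
  intro y hy
  refine ⟨adjoint (V1 u) y, jointRange_adjoint_mem h1 h2 hc u hy, ?_⟩
  obtain ⟨z, hz⟩ := hy u 0
  have hz' : V1 u z = y := by rw [← hz, h2.1.1]; rfl
  rw [← hz', adjoint_apply_apply (h1.2 u), hz']

lemma jointRange_reducedBy {V1 V2 : ℝ≥0 → H →L[ℂ] H}
    (h1 : IsIsometrySemigroup V1) (h2 : IsIsometrySemigroup V2) (hc : SgCommute V1 V2) :
    ReducedBy V1 (jointRange V1 V2) :=
  ⟨fun u x hx => jointRange_map_mem h1 h2 hc u hx,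
   fun u x hx => jointRange_adjoint_mem h1 h2 hc u hx⟩

/-- Any subspace reducing the product semigroup on which it is unitary is contained in
the joint unitary subspace. -/
lemma le_jointRange {V1 V2 : ℝ≥0 → H →L[ℂ] H}
    (h1 : IsIsometrySemigroup V1) (h2 : IsIsometrySemigroup V2) (hc : SgCommute V1 V2)
    {L : Submodule ℂ H} (hred : ReducedBy (fun t => V1 t ∘L V2 t) L)
    (huni : IsUnitarySemigroupOn (fun t => V1 t ∘L V2 t) L) :
    L ≤ jointRange V1 V2 := by
  intro x hxL
  intro s t
  set r : ℝ≥0 := s ⊔ t with hr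
  set A : H →L[ℂ] H := V1 s ∘L V2 t with hA
  set B : H →L[ℂ] H := V1 (r - s) ∘L V2 (r - t) with hB
  have hWiso : ∀ (u : ℝ≥0) (z : H), ‖(V1 u ∘L V2 u) z‖ = ‖z‖ := by
    intro u z
    simp only [ContinuousLinearMap.comp_apply]
    rw [h1.2 u, h2.2 u]
  have hAiso : ∀ z : H, ‖A z‖ = ‖z‖ := by
    intro z
    simp only [hA, ContinuousLinearMap.comp_apply]
    rw [h1.2 s, h2.2 t]
  have hBiso : ∀ z : H, ‖B z‖ = ‖z‖ := by
    intro z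
    simp only [hB, ContinuousLinearMap.comp_apply]
    rw [h1.2 (r - s), h2.2 (r - t)]
  -- decomposition W r = A ∘L B
  have hdecomp : (V1 r ∘L V2 r) = A ∘L B := by
    have e1 : V1 r = V1 s ∘L V1 (r - s) := by
      rw [← h1.1.2.1, add_tsub_cancel_of_le (le_sup_left : s ≤ r)]
    have e2 : V2 r = V2 t ∘L V2 (r - t) := by
      rw [← h2.1.2.1, add_tsub_cancel_of_le (le_sup_right : t ≤ r)]
    rw [e1, e2, hA, hB]
    simp only [ContinuousLinearMap.comp_assoc]
    congr 1
    rw [← ContinuousLinearMap.comp_assoc, hc (r - s) t, ContinuousLinearMap.comp_assoc]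
  -- the norm of `adjoint (W r) x` is `‖x‖`
  have hWnorm : ‖adjoint (V1 r ∘L V2 r) x‖ = ‖x‖ := by
    obtain ⟨z, hzL, hz⟩ := (huni r).2.2 x hxL
    have : adjoint (V1 r ∘L V2 r) x = z := by
      rw [← hz]
      exact adjoint_apply_apply (hWiso r) z
    rw [this, ← hz]
    exact (hWiso r z).symm
  -- squeeze
  have hAnorm : ‖adjoint A x‖ = ‖x‖ := by
    have hle1 : ‖adjoint A x‖ ≤ ‖x‖ := norm_adjoint_apply_le hAiso x
    have hge : ‖x‖ ≤ ‖adjoint A x‖ := by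
      calc ‖x‖ = ‖adjoint (V1 r ∘L V2 r) x‖ := hWnorm.symm
        _ = ‖adjoint B (adjoint A x)‖ := by
            rw [hdecomp, ContinuousLinearMap.adjoint_comp]; rfl
        _ ≤ ‖adjoint A x‖ := norm_adjoint_apply_le hBiso _
    linarith
  refine ⟨adjoint A x, ?_⟩
  have := fix_of_norm_adjoint hAiso hAnorm
  simpa only [hA, ContinuousLinearMap.comp_apply] using this

end CnuProductAux

open CnuProductAux

/-- A commuting pair of C₀-semigroups of isometries is completely nonunitary iff the
product semigroup `(V_{1,t} V_{2,t})_{t ≥ 0}` is a completely nonunitary semigroup. -/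
theorem cnu_pair_iff_product_cnu {H : Type} [NormedAddCommGroup H]
    [InnerProductSpace ℂ H] [CompleteSpace H] (V1 V2 : ℝ≥0 → H →L[ℂ] H)
    (h1 : IsIsometrySemigroup V1) (h2 : IsIsometrySemigroup V2) (hc : SgCommute V1 V2) :
    IsCnuPair V1 V2 ↔ IsCnu fun t => V1 t ∘L V2 t := by
  constructor
  · -- hard direction: pair CNU → product CNU
    intro hpair
    intro L hLclosed _ hred huni
    have hc' : SgCommute V2 V1 := fun t s => (hc s t).symm
    have hM : jointRange V1 V2 = ⊥ := by
      refine hpair (jointRange V1 V2) (jointRange_isClosed h1 h2)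
        (jointRange_reducedBy h1 h2 hc) ?_ (jointRange_unitaryOn h1 h2 hc) ?_
      · rw [← jointRange_comm hc]
        exact jointRange_reducedBy h2 h1 hc'
      · rw [← jointRange_comm hc]
        exact jointRange_unitaryOn h2 h1 hc'
    have hLle : L ≤ jointRange V1 V2 := le_jointRange h1 h2 hc hred huni
    rw [hM] at hLle
    exact le_bot_iff.mp hLle
  · -- easy direction: product CNU → pair CNU
    intro hprod
    intro L hLclosed hr1 hr2 hu1 hu2
    refine hprod L hLclosed le_top ⟨?_, ?_⟩ ?_
    · intro t x hx
      exact hr1.1 t _ (hr2.1 t x hx)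
    · intro t x hx
      have : adjoint (V1 t ∘L V2 t) x = adjoint (V2 t) (adjoint (V1 t) x) := by
        rw [ContinuousLinearMap.adjoint_comp]; rfl
      rw [this]
      exact hr2.2 t _ (hr1.2 t x hx)
    · intro t
      refine ⟨fun x hx => hr1.1 t _ (hr2.1 t x hx), ?_, ?_⟩
      · intro x _
        simp only [ContinuousLinearMap.comp_apply]
        rw [h1.2 t, h2.2 t]
      · intro y hy
        obtain ⟨x1, hx1L, hx1⟩ := (hu1 t).2.2 y hy
        obtain ⟨x2, hx2L, hx2⟩ := (hu2 t).2.2 x1 hx1L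
        exact ⟨x2, hx2L, by simp only [ContinuousLinearMap.comp_apply]; rw [hx2, hx1]⟩
end
end

section
/- Let v₁ and v₂ be commuting isometries on a complex Hilbert space H, let v = v₁ v₂, and let H_u = ⋂_{n ≥ 0} ran(vⁿ) be the unitary part in the Wold decomposition of v. Then H_u reduces both v₁ and v₂: v_j H_u ⊆ H_u and v_j* H_u ⊆ H_u for j = 1,2. -/
open MeasureTheory ContinuousLinearMap
open scoped ENNReal NNReal InnerProductSpace ComplexInnerProductSpace

noncomputable section

/-- adjoint of an isometry is a left inverse -/
lemma adjoint_isometry_apply {H : Type} [NormedAddCommGroup H]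
    [InnerProductSpace ℂ H] [CompleteSpace H] (v : H →L[ℂ] H)
    (h : ∀ x : H, ‖v x‖ = ‖x‖) (x : H) :
    ContinuousLinearMap.adjoint v (v x) = x := by
  have hin : ∀ a b : H, ⟪v a, v b⟫_ℂ = ⟪a, b⟫_ℂ :=
    (LinearMap.norm_map_iff_inner_map_map v).mp h
  apply ext_inner_right ℂ
  intro y
  rw [ContinuousLinearMap.adjoint_inner_left, hin]

/-- For commuting isometries `v₁, v₂` with product `v = v₁v₂`, the unitary part
`H_u = ⋂ₙ ran(vⁿ)` of the Wold decomposition of `v` reduces both `v₁` and `v₂`. -/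
theorem wold_unitary_part_reduces {H : Type} [NormedAddCommGroup H]
    [InnerProductSpace ℂ H] [CompleteSpace H] (v1 v2 : H →L[ℂ] H)
    (h1 : ∀ x : H, ‖v1 x‖ = ‖x‖) (h2 : ∀ x : H, ‖v2 x‖ = ‖x‖)
    (hc : v1 ∘L v2 = v2 ∘L v1) :
    ∀ Hu : Submodule ℂ H,
      Hu = (⨅ n : ℕ, LinearMap.range ((((v1 ∘L v2) ^ n) : H →L[ℂ] H) : H →ₗ[ℂ] H)) →
      ∀ x ∈ Hu, v1 x ∈ Hu ∧ ContinuousLinearMap.adjoint v1 x ∈ Hu ∧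
        v2 x ∈ Hu ∧ ContinuousLinearMap.adjoint v2 x ∈ Hu := by
  intro Hu hHu x hx
  have hcp : ∀ z : H, v1 (v2 z) = v2 (v1 z) := fun z =>
    congrArg (fun f : H →L[ℂ] H => f z) hc
  subst hHu
  have hmem : ∀ n : ℕ, x ∈ LinearMap.range ((((v1 ∘L v2) ^ n) : H →L[ℂ] H) : H →ₗ[ℂ] H) :=
    fun n => (Submodule.mem_iInf _).mp hx n
  have hpow : ∀ (n : ℕ) (z : H),
      ((v1 ∘L v2) ^ (n + 1)) z = v1 (v2 (((v1 ∘L v2) ^ n) z)) := by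
    intro n z
    rw [pow_succ']
    rfl
  -- pointwise commutation of v1, v2 with powers of v
  have hcn : ∀ (w : H →L[ℂ] H), (∀ z, w (v1 (v2 z)) = v1 (v2 (w z))) →
      ∀ (n : ℕ) (z : H), w (((v1 ∘L v2) ^ n) z) = ((v1 ∘L v2) ^ n) (w z) := by
    intro w hw n
    induction n with
    | zero => intro z; simp
    | succ n ih =>
      intro z
      rw [hpow, hpow, ← ih, ← hw]
  have hw1 : ∀ z : H, v1 (v1 (v2 z)) = v1 (v2 (v1 z)) := by
    intro z; rw [hcp z]
  have hw2 : ∀ z : H, v2 (v1 (v2 z)) = v1 (v2 (v2 z)) := by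
    intro z; rw [hcp (v2 z)]
  have hfwd : ∀ (w : H →L[ℂ] H), (∀ z, w (v1 (v2 z)) = v1 (v2 (w z))) →
      w x ∈ ⨅ n : ℕ, LinearMap.range ((((v1 ∘L v2) ^ n) : H →L[ℂ] H) : H →ₗ[ℂ] H) := by
    intro w hw
    rw [Submodule.mem_iInf]
    intro n
    obtain ⟨y, hy⟩ := hmem n
    exact ⟨w y, by simp only [ContinuousLinearMap.coe_coe] at hy ⊢; rw [← hcn w hw n y, hy]⟩
  refine ⟨hfwd v1 hw1, ?_, hfwd v2 hw2, ?_⟩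
  · rw [Submodule.mem_iInf]
    intro n
    obtain ⟨y, hy⟩ := hmem (n + 1)
    refine ⟨v2 y, ?_⟩
    simp only [ContinuousLinearMap.coe_coe] at hy ⊢
    rw [← hcn v2 hw2 n y, ← hy, hpow, adjoint_isometry_apply v1 h1]
  · rw [Submodule.mem_iInf]
    intro n
    obtain ⟨y, hy⟩ := hmem (n + 1)
    refine ⟨v1 y, ?_⟩
    simp only [ContinuousLinearMap.coe_coe] at hy ⊢
    rw [← hcn v1 hw1 n y, ← hy, hpow, hcp, adjoint_isometry_apply v2 h2]
end
end

section
/- Let H = {f ∈ L²(ℝ²) : f = 0 a.e. on ℝ₊²} (identified with L²(ℝ² ∖ ℝ₊²)), and let Ū₁, Ū₂ be the strongly continuous one-parameter unitary groups on L²(ℝ²) given by (Ū_{1,t} f)(x₁,x₂) = f(x₁ + t, x₂) and (Ū_{2,t} f)(x₁,x₂) = f(x₁, x₂ + t) for t ∈ ℝ. Then: (a) for every t ≥ 0 and j = 1,2, H is invariant under Ū_{j,t} and Ū_{j,t}|_H = M_{j,t}; (b) the closed linear span of {Ū_{1,t} Ū_{2,s} h : t,s ∈ ℝ, h ∈ H}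 equals L²(ℝ²), so (Ū₁, Ū₂) is a minimal unitary extension of (M₁, M₂); (c) the orthogonal complement of H in L²(ℝ²) is {f : f = 0 a.e. off ℝ₊²} ≅ L²(ℝ₊²), it is invariant under Ū_{j,t}* for t ≥ 0, and Ū_{1,t}*|_{H^⊥} = 𝒮_{1,t}, Ū_{2,t}*|_{H^⊥} = 𝒮_{2,t}; hence the dual of (M₁, M₂) is (𝒮₁, 𝒮₂) on L²(ℝ₊²), and (M₁, M₂) is dual doubly commuting. -/
open MeasureTheory ContinuousLinearMap
open scoped ENNReal NNReal InnerProductSpace ComplexInnerProductSpace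

noncomputable section

/-- The closed first quadrant `ℝ₊² ⊆ ℝ²`. -/
def QQ : Set (ℝ × ℝ) := {p | 0 ≤ p.1 ∧ 0 ≤ p.2}

/-- Lebesgue measure on `ℝ²` restricted to the quadrant `ℝ₊²`; `Lp F 2 nuQ` plays the
role of `L²(ℝ₊², F)`. -/
def nuQ : Measure (ℝ × ℝ) := (volume : Measure (ℝ × ℝ)).restrict QQ

/-- Lebesgue measure on `ℝ²` restricted to `ℝ² ∖ ℝ₊²`; `Lp F 2 nuQc` plays the role of
`L²(ℝ² ∖ ℝ₊², F)`. -/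
def nuQc : Measure (ℝ × ℝ) := (volume : Measure (ℝ × ℝ)).restrict QQᶜ

/-- `(V1, V2)` is a bishift-semigroup: it is jointly unitarily equivalent to the pair
`(𝒮₁^F, 𝒮₂^F)` of shift semigroups on `L²(ℝ₊², F)` for some Hilbert space `F`. -/
def IsBishiftPair {G : Type} [NormedAddCommGroup G] [InnerProductSpace ℂ G] [CompleteSpace G]
    (V1 V2 : ℝ≥0 → G →L[ℂ] G) : Prop :=
  ∃ (F : Type) (_ : NormedAddCommGroup F) (_ : InnerProductSpace ℂ F) (_ : CompleteSpace F)
    (Z : G ≃ₗᵢ[ℂ] Lp F 2 nuQ),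
    ∀ (t : ℝ≥0) (x : G),
      ((Z (V1 t x) : ℝ × ℝ → F) =ᵐ[nuQ]
        fun p => if (t : ℝ) ≤ p.1 then (Z x : ℝ × ℝ → F) (p.1 - (t : ℝ), p.2) else 0) ∧
      ((Z (V2 t x) : ℝ × ℝ → F) =ᵐ[nuQ]
        fun p => if (t : ℝ) ≤ p.2 then (Z x : ℝ × ℝ → F) (p.1, p.2 - (t : ℝ)) else 0)

/-- `T` is the translation `(f)(x₁,x₂) ↦ f(x₁ + t, x₂)` on `L²(ℝ²)`. -/
def IsTrans1 (t : ℝ)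
    (T : Lp ℂ 2 (volume : Measure (ℝ × ℝ)) →L[ℂ] Lp ℂ 2 (volume : Measure (ℝ × ℝ))) :
    Prop :=
  ∀ f : Lp ℂ 2 (volume : Measure (ℝ × ℝ)),
    (T f : ℝ × ℝ → ℂ) =ᵐ[(volume : Measure (ℝ × ℝ))]
      fun p => (f : ℝ × ℝ → ℂ) (p.1 + t, p.2)

/-- `T` is the translation `(f)(x₁,x₂) ↦ f(x₁, x₂ + t)` on `L²(ℝ²)`. -/
def IsTrans2 (t : ℝ)
    (T : Lp ℂ 2 (volume : Measure (ℝ × ℝ)) →L[ℂ] Lp ℂ 2 (volume : Measure (ℝ × ℝ))) :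
    Prop :=
  ∀ f : Lp ℂ 2 (volume : Measure (ℝ × ℝ)),
    (T f : ℝ × ℝ → ℂ) =ᵐ[(volume : Measure (ℝ × ℝ))]
      fun p => (f : ℝ × ℝ → ℂ) (p.1, p.2 + t)

/-- `f ∈ L²(ℝ²)` vanishes a.e. on the quadrant `ℝ₊²`, i.e. `f` belongs to the copy of
`L²(ℝ² ∖ ℝ₊²)` inside `L²(ℝ²)`. -/
def ZeroOnQ (f : Lp ℂ 2 (volume : Measure (ℝ × ℝ))) : Prop :=
  ∀ᵐ p ∂(volume : Measure (ℝ × ℝ)), p ∈ QQ → (f : ℝ × ℝ → ℂ) p = 0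

/-- `f ∈ L²(ℝ²)` vanishes a.e. off the quadrant `ℝ₊²`, i.e. `f` belongs to the copy of
`L²(ℝ₊²)` inside `L²(ℝ²)`. -/
def ZeroOffQ (f : Lp ℂ 2 (volume : Measure (ℝ × ℝ))) : Prop :=
  ∀ᵐ p ∂(volume : Measure (ℝ × ℝ)), p ∉ QQ → (f : ℝ × ℝ → ℂ) p = 0

/-! ### Auxiliary lemmas for the proof -/

local notation "vol2" => (volume : Measure (ℝ × ℝ))
local notation "L2S" => Lp ℂ 2 (volume : Measure (ℝ × ℝ))

lemma mem_QQ_iff {p : ℝ × ℝ} : p ∈ QQ ↔ 0 ≤ p.1 ∧ 0 ≤ p.2 := Iff.rfl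

lemma QQmeas : MeasurableSet QQ :=
  (measurable_fst measurableSet_Ici).inter (measurable_snd measurableSet_Ici)

def cmapA (t : ℝ) : C(ℝ × ℝ, ℝ × ℝ) := ⟨fun p => (p.1 + t, p.2), by fun_prop⟩
def cmapB (t : ℝ) : C(ℝ × ℝ, ℝ × ℝ) := ⟨fun p => (p.1, p.2 + t), by fun_prop⟩

lemma mpA (t : ℝ) : MeasurePreserving (⇑(cmapA t)) vol2 vol2 := by
  have h := measurePreserving_add_right vol2 ((t, 0) : ℝ × ℝ)
  have e : (fun x : ℝ × ℝ => x + (t, 0)) = ⇑(cmapA t) := by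
    funext p; show (p.1 + t, p.2 + 0) = _; rw [add_zero]; rfl
  rwa [e] at h

lemma mpB (t : ℝ) : MeasurePreserving (⇑(cmapB t)) vol2 vol2 := by
  have h := measurePreserving_add_right vol2 ((0, t) : ℝ × ℝ)
  have e : (fun x : ℝ × ℝ => x + (0, t)) = ⇑(cmapB t) := by
    funext p; show (p.1 + 0, p.2 + t) = _; rw [add_zero]; rfl
  rwa [e] at h

lemma aeS1 (a : ℝ) {P : ℝ → ℝ → Prop} (h : ∀ᵐ p ∂vol2, P p.1 p.2) :
    ∀ᵐ p ∂vol2, P (p.1 + a) p.2 := (mpA a).quasiMeasurePreserving.ae h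

lemma aeS2 (b : ℝ) {P : ℝ → ℝ → Prop} (h : ∀ᵐ p ∂vol2, P p.1 p.2) :
    ∀ᵐ p ∂vol2, P p.1 (p.2 + b) := (mpB b).quasiMeasurePreserving.ae h

lemma contCmapA : Continuous cmapA :=
  ContinuousMap.continuous_of_continuous_uncurry _ (by
    apply Continuous.prodMk <;> fun_prop)

lemma contCmapB : Continuous cmapB :=
  ContinuousMap.continuous_of_continuous_uncurry _ (by
    apply Continuous.prodMk <;> fun_prop)

lemma teqA (t : ℝ) (T : L2S →L[ℂ] L2S) (hT : IsTrans1 t T) (f : L2S) :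
    T f = Lp.compMeasurePreserving (⇑(cmapA t)) (mpA t) f :=
  Lp.ext ((hT f).trans (Lp.coeFn_compMeasurePreserving f (mpA t)).symm)

lemma teqB (t : ℝ) (T : L2S →L[ℂ] L2S) (hT : IsTrans2 t T) (f : L2S) :
    T f = Lp.compMeasurePreserving (⇑(cmapB t)) (mpB t) f :=
  Lp.ext ((hT f).trans (Lp.coeFn_compMeasurePreserving f (mpB t)).symm)

lemma tnormA (t : ℝ) (T : L2S →L[ℂ] L2S) (hT : IsTrans1 t T) (f : L2S) :
    ‖T f‖ = ‖f‖ := by rw [teqA t T hT f]; exact Lp.norm_compMeasurePreserving f (mpA t)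

lemma tnormB (t : ℝ) (T : L2S →L[ℂ] L2S) (hT : IsTrans2 t T) (f : L2S) :
    ‖T f‖ = ‖f‖ := by rw [teqB t T hT f]; exact Lp.norm_compMeasurePreserving f (mpB t)

lemma tcontA (U : ℝ → L2S →L[ℂ] L2S) (h : ∀ t, IsTrans1 t (U t)) (x : L2S) :
    Continuous fun t : ℝ => U t x := by
  have hc : Continuous fun t : ℝ => Lp.compMeasurePreserving (⇑(cmapA t)) (mpA t) x :=
    Continuous.compMeasurePreservingLp continuous_const contCmapA (fun t => mpA t)
      ENNReal.ofNat_ne_top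
  have e : (fun t : ℝ => U t x) = fun t : ℝ =>
      Lp.compMeasurePreserving (⇑(cmapA t)) (mpA t) x :=
    funext fun t => teqA t (U t) (h t) x
  rw [e]; exact hc

lemma tcontB (U : ℝ → L2S →L[ℂ] L2S) (h : ∀ t, IsTrans2 t (U t)) (x : L2S) :
    Continuous fun t : ℝ => U t x := by
  have hc : Continuous fun t : ℝ => Lp.compMeasurePreserving (⇑(cmapB t)) (mpB t) x :=
    Continuous.compMeasurePreservingLp continuous_const contCmapB (fun t => mpB t)
      ENNReal.ofNat_ne_top
  have e : (fun t : ℝ => U t x) = fun t : ℝ =>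
      Lp.compMeasurePreserving (⇑(cmapB t)) (mpB t) x :=
    funext fun t => teqB t (U t) (h t) x
  rw [e]; exact hc

/-- The orthogonal-complement characterization: `g ⊥ H` iff `g` vanishes a.e. off the
quadrant. -/
lemma zeroOnQ_inner_iff (g : L2S) :
    (∀ f, ZeroOnQ f → ⟪f, g⟫_ℂ = 0) ↔ ZeroOffQ g := by
  constructor
  · intro hgo
    have hmem : MemLp (QQᶜ.indicator ⇑g) 2 vol2 := (Lp.memLp g).indicator QQmeas.compl
    have hfc : ⇑(hmem.toLp (QQᶜ.indicator ⇑g)) =ᵐ[vol2] QQᶜ.indicator ⇑g := hmem.coeFn_toLp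
    set fQ := hmem.toLp (QQᶜ.indicator ⇑g) with hfQ
    have hon : ZeroOnQ fQ := by
      filter_upwards [hfc] with p hp hpQ
      rw [hp, Set.indicator_of_notMem (by simpa using hpQ)]
    have h0 : ⟪fQ, g⟫_ℂ = 0 := hgo fQ hon
    have hEq : ⟪fQ, fQ⟫_ℂ = ⟪fQ, g⟫_ℂ := by
      rw [L2.inner_def, L2.inner_def]
      refine integral_congr_ae ?_
      filter_upwards [hfc] with p hp
      rw [hp]
      by_cases hpc : p ∈ QQᶜ
      · rw [Set.indicator_of_mem hpc]
      · rw [Set.indicator_of_notMem hpc, inner_zero_left, inner_zero_left]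
    have hz : fQ = 0 := inner_self_eq_zero.mp (hEq.trans h0)
    have hz' : ⇑fQ =ᵐ[vol2] (0 : ℝ × ℝ → ℂ) := by rw [hz]; exact Lp.coeFn_zero ℂ 2 vol2
    filter_upwards [hfc, hz'] with p h1 h2 hpn
    have h3 : QQᶜ.indicator (⇑g) p = 0 := by rw [← h1]; exact h2
    rwa [Set.indicator_of_mem (by simpa using hpn)] at h3
  · intro hoff f hf
    rw [L2.inner_def]
    refine integral_eq_zero_of_ae ?_
    filter_upwards [hf, hoff] with p h1 h2
    simp only [Pi.zero_apply]
    by_cases hp : p ∈ QQ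
    · rw [h1 hp, inner_zero_left]
    · rw [h2 hp, inner_zero_right]


/-- The translation groups `(Ū₁, Ū₂)` on `L²(ℝ²)` form a minimal unitary extension of the
pair `(M₁, M₂)` on `H = L²(ℝ² ∖ ℝ₊²)`: (a) `H` is invariant under `Ū_{j,t}`, `t ≥ 0`, and
the restrictions are `M_{j,t}`; (b) minimality; (c) `H^⊥ = L²(ℝ₊²)` is invariant under the
adjoints, on which they act as the shifts `𝒮_{j,t}`, so the dual of `(M₁, M₂)` is
`(𝒮₁, 𝒮₂)`; (d) the dual pair is doubly commuting, i.e. `(M₁, M₂)` is dual doubly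
commuting. -/
theorem quadrant_model_minimal_extension_and_dual
    (U1 U2 : ℝ → Lp ℂ 2 (volume : Measure (ℝ × ℝ)) →L[ℂ] Lp ℂ 2 (volume : Measure (ℝ × ℝ)))
    (hT1 : ∀ t : ℝ, IsTrans1 t (U1 t)) (hT2 : ∀ t : ℝ, IsTrans2 t (U2 t)) :
    -- (a)
    (∀ t : ℝ, 0 ≤ t → ∀ f, ZeroOnQ f →
      ZeroOnQ (U1 t f) ∧ ZeroOnQ (U2 t f) ∧
      ((U1 t f : ℝ × ℝ → ℂ) =ᵐ[(volume : Measure (ℝ × ℝ))]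
        fun p => if 0 ≤ p.2 ∧ -t ≤ p.1 then 0 else (f : ℝ × ℝ → ℂ) (p.1 + t, p.2)) ∧
      ((U2 t f : ℝ × ℝ → ℂ) =ᵐ[(volume : Measure (ℝ × ℝ))]
        fun p => if 0 ≤ p.1 ∧ -t ≤ p.2 then 0 else (f : ℝ × ℝ → ℂ) (p.1, p.2 + t))) ∧
    -- (b)
    (IsUnitaryGroup U1 ∧ IsUnitaryGroup U2 ∧
      (∀ s t : ℝ, U1 s ∘L U2 t = U2 t ∘L U1 s) ∧
      (Submodule.span ℂ {g : Lp ℂ 2 (volume : Measure (ℝ × ℝ)) |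
        ∃ (t s : ℝ) (f : Lp ℂ 2 (volume : Measure (ℝ × ℝ))),
          ZeroOnQ f ∧ g = U1 t (U2 s f)}).topologicalClosure = ⊤) ∧
    -- (c)
    ((∀ g : Lp ℂ 2 (volume : Measure (ℝ × ℝ)),
        (∀ f, ZeroOnQ f → ⟪f, g⟫_ℂ = 0) ↔ ZeroOffQ g) ∧
      ∀ t : ℝ, 0 ≤ t → ∀ g, ZeroOffQ g →
        ZeroOffQ (adjoint (U1 t) g) ∧ ZeroOffQ (adjoint (U2 t) g) ∧
        ((adjoint (U1 t) g : ℝ × ℝ → ℂ) =ᵐ[(volume : Measure (ℝ × ℝ))]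
          fun p => if t ≤ p.1 then (g : ℝ × ℝ → ℂ) (p.1 - t, p.2) else 0) ∧
        ((adjoint (U2 t) g : ℝ × ℝ → ℂ) =ᵐ[(volume : Measure (ℝ × ℝ))]
          fun p => if t ≤ p.2 then (g : ℝ × ℝ → ℂ) (p.1, p.2 - t) else 0)) ∧
    -- (d)
    ∀ t s : ℝ, 0 ≤ t → 0 ≤ s → ∀ g, ZeroOffQ g →
      ∀ w w' : Lp ℂ 2 (volume : Measure (ℝ × ℝ)), ZeroOffQ w →
        ZeroOnQ (U2 s g - w) → ZeroOffQ w' →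
        ZeroOnQ (U2 s (adjoint (U1 t) g) - w') →
        adjoint (U1 t) w = w' := by
  classical
  -- norms
  have n1 : ∀ (t : ℝ) (f), ‖U1 t f‖ = ‖f‖ := fun t f => tnormA t (U1 t) (hT1 t) f
  have n2 : ∀ (t : ℝ) (f), ‖U2 t f‖ = ‖f‖ := fun t f => tnormB t (U2 t) (hT2 t) f
  -- identity
  have z1 : U1 0 = 1 := by
    ext f
    filter_upwards [hT1 0 f] with p hp
    simpa using hp
  have z2 : U2 0 = 1 := by
    ext f
    filter_upwards [hT2 0 f] with p hp
    simpa using hp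
  -- group laws
  have add1 : ∀ s t : ℝ, U1 (s + t) = U1 s ∘L U1 t := by
    intro s t; ext f
    filter_upwards [hT1 (s + t) f, hT1 s (U1 t f),
      aeS1 s (P := fun x y => (U1 t f : ℝ × ℝ → ℂ) (x, y) = (f : ℝ × ℝ → ℂ) (x + t, y))
        (hT1 t f)] with p e0 e1 e2
    rw [ContinuousLinearMap.comp_apply, e0, e1, e2, add_assoc]
  have add2 : ∀ s t : ℝ, U2 (s + t) = U2 s ∘L U2 t := by
    intro s t; ext f
    filter_upwards [hT2 (s + t) f, hT2 s (U2 t f),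
      aeS2 s (P := fun x y => (U2 t f : ℝ × ℝ → ℂ) (x, y) = (f : ℝ × ℝ → ℂ) (x, y + t))
        (hT2 t f)] with p e0 e1 e2
    rw [ContinuousLinearMap.comp_apply, e0, e1, e2, add_assoc]
  -- cancellation
  have cancel1 : ∀ (t : ℝ) (x), U1 t (U1 (-t) x) = x := by
    intro t x
    have h : U1 t (U1 (-t) x) = (U1 t ∘L U1 (-t)) x := rfl
    rw [h, ← add1 t (-t), add_neg_cancel, z1, ContinuousLinearMap.one_apply]
  have cancel2 : ∀ (t : ℝ) (x), U2 t (U2 (-t) x) = x := by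
    intro t x
    have h : U2 t (U2 (-t) x) = (U2 t ∘L U2 (-t)) x := rfl
    rw [h, ← add2 t (-t), add_neg_cancel, z2, ContinuousLinearMap.one_apply]
  have surj1 : ∀ t : ℝ, Function.Surjective (U1 t) := fun t y => ⟨U1 (-t) y, cancel1 t y⟩
  have surj2 : ∀ t : ℝ, Function.Surjective (U2 t) := fun t y => ⟨U2 (-t) y, cancel2 t y⟩
  have ug1 : IsUnitaryGroup U1 := ⟨z1, add1, n1, surj1, fun x => tcontA U1 hT1 x⟩
  have ug2 : IsUnitaryGroup U2 := ⟨z2, add2, n2, surj2, fun x => tcontB U2 hT2 x⟩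
  -- inner products are preserved
  have ip1 : ∀ (t : ℝ) (x y), ⟪U1 t x, U1 t y⟫_ℂ = ⟪x, y⟫_ℂ := fun t x y =>
    LinearIsometry.inner_map_map
      (⟨(U1 t).toLinearMap, n1 t⟩ : Lp ℂ 2 (volume : Measure (ℝ × ℝ)) →ₗᵢ[ℂ]
        Lp ℂ 2 (volume : Measure (ℝ × ℝ))) x y
  have ip2 : ∀ (t : ℝ) (x y), ⟪U2 t x, U2 t y⟫_ℂ = ⟪x, y⟫_ℂ := fun t x y =>
    LinearIsometry.inner_map_map
      (⟨(U2 t).toLinearMap, n2 t⟩ : Lp ℂ 2 (volume : Measure (ℝ × ℝ)) →ₗᵢ[ℂ]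
        Lp ℂ 2 (volume : Measure (ℝ × ℝ))) x y
  -- adjoints
  have adj1 : ∀ t : ℝ, adjoint (U1 t) = U1 (-t) := by
    intro t
    refine (((U1 (-t)).eq_adjoint_iff (U1 t)).mpr ?_).symm
    intro x y
    conv_rhs => rw [← cancel1 t x]
    exact (ip1 t (U1 (-t) x) y).symm
  have adj2 : ∀ t : ℝ, adjoint (U2 t) = U2 (-t) := by
    intro t
    refine (((U2 (-t)).eq_adjoint_iff (U2 t)).mpr ?_).symm
    intro x y
    conv_rhs => rw [← cancel2 t x]
    exact (ip2 t (U2 (-t) x) y).symm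
  -- commutation
  have comm : ∀ s t : ℝ, U1 s ∘L U2 t = U2 t ∘L U1 s := by
    intro s t; ext f
    filter_upwards [hT1 s (U2 t f),
      aeS1 s (P := fun x y => (U2 t f : ℝ × ℝ → ℂ) (x, y) = (f : ℝ × ℝ → ℂ) (x, y + t))
        (hT2 t f),
      hT2 t (U1 s f),
      aeS2 t (P := fun x y => (U1 s f : ℝ × ℝ → ℂ) (x, y) = (f : ℝ × ℝ → ℂ) (x + s, y))
        (hT1 s f)] with p e1 e2 e3 e4
    rw [ContinuousLinearMap.comp_apply, ContinuousLinearMap.comp_apply, e1, e2, e3, e4]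
  -- part (a)
  have parta : ∀ t : ℝ, 0 ≤ t → ∀ f, ZeroOnQ f →
      ZeroOnQ (U1 t f) ∧ ZeroOnQ (U2 t f) ∧
      ((U1 t f : ℝ × ℝ → ℂ) =ᵐ[(volume : Measure (ℝ × ℝ))]
        fun p => if 0 ≤ p.2 ∧ -t ≤ p.1 then 0 else (f : ℝ × ℝ → ℂ) (p.1 + t, p.2)) ∧
      ((U2 t f : ℝ × ℝ → ℂ) =ᵐ[(volume : Measure (ℝ × ℝ))]
        fun p => if 0 ≤ p.1 ∧ -t ≤ p.2 then 0 else (f : ℝ × ℝ → ℂ) (p.1, p.2 + t)) := by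
    intro t ht f hf
    refine ⟨?_, ?_, ?_, ?_⟩
    · filter_upwards [hT1 t f,
        aeS1 t (P := fun x y => ((x, y) ∈ QQ → (f : ℝ × ℝ → ℂ) (x, y) = 0)) hf]
        with p e1 e2 hp
      rw [e1]
      refine e2 (mem_QQ_iff.mpr ⟨?_, (mem_QQ_iff.mp hp).2⟩)
      show (0 : ℝ) ≤ p.1 + t
      have := (mem_QQ_iff.mp hp).1; linarith
    · filter_upwards [hT2 t f,
        aeS2 t (P := fun x y => ((x, y) ∈ QQ → (f : ℝ × ℝ → ℂ) (x, y) = 0)) hf]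
        with p e1 e2 hp
      rw [e1]
      refine e2 (mem_QQ_iff.mpr ⟨(mem_QQ_iff.mp hp).1, ?_⟩)
      show (0 : ℝ) ≤ p.2 + t
      have := (mem_QQ_iff.mp hp).2; linarith
    · filter_upwards [hT1 t f,
        aeS1 t (P := fun x y => ((x, y) ∈ QQ → (f : ℝ × ℝ → ℂ) (x, y) = 0)) hf]
        with p e1 e2
      rw [e1]
      by_cases hc : 0 ≤ p.2 ∧ -t ≤ p.1
      · rw [if_pos hc]
        refine e2 (mem_QQ_iff.mpr ⟨?_, hc.1⟩)
        show (0 : ℝ) ≤ p.1 + t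
        have := hc.2; linarith
      · rw [if_neg hc]
    · filter_upwards [hT2 t f,
        aeS2 t (P := fun x y => ((x, y) ∈ QQ → (f : ℝ × ℝ → ℂ) (x, y) = 0)) hf]
        with p e1 e2
      rw [e1]
      by_cases hc : 0 ≤ p.1 ∧ -t ≤ p.2
      · rw [if_pos hc]
        refine e2 (mem_QQ_iff.mpr ⟨hc.1, ?_⟩)
        show (0 : ℝ) ≤ p.2 + t
        have := hc.2; linarith
      · rw [if_neg hc]
  -- part (b): minimality
  have hdense : (Submodule.span ℂ {g : Lp ℂ 2 (volume : Measure (ℝ × ℝ)) |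
      ∃ (t s : ℝ) (f : Lp ℂ 2 (volume : Measure (ℝ × ℝ))),
        ZeroOnQ f ∧ g = U1 t (U2 s f)}).topologicalClosure = ⊤ := by
    rw [Submodule.topologicalClosure_eq_top_iff, Submodule.eq_bot_iff]
    intro g hg
    have horth : ∀ (t s : ℝ) (f), ZeroOnQ f → ⟪U1 t (U2 s f), g⟫_ℂ = 0 := by
      intro t s f hf
      exact (Submodule.mem_orthogonal _ g).mp hg _ (Submodule.subset_span ⟨t, s, f, hf, rfl⟩)
    have key : ∀ n : ℕ, ∀ᵐ p ∂(volume : Measure (ℝ × ℝ)),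
        ((p.1 + -(n : ℝ), p.2 + -(n : ℝ)) ∉ QQ → (g : ℝ × ℝ → ℂ) p = 0) := by
      intro n
      have hOrtho : ∀ f, ZeroOnQ f → ⟪f, U2 (n : ℝ) (U1 (n : ℝ) g)⟫_ℂ = 0 := by
        intro f hf
        have h1 := horth (-(n : ℝ)) (-(n : ℝ)) f hf
        have c1g : U1 (-(n : ℝ)) (U1 (n : ℝ) g) = g := by
          have := cancel1 (-(n : ℝ)) g; rwa [neg_neg] at this
        have h2 : ⟪U2 (-(n : ℝ)) f, U1 (n : ℝ) g⟫_ℂ = 0 := by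
          have h3 := ip1 (-(n : ℝ)) (U2 (-(n : ℝ)) f) (U1 (n : ℝ) g)
          rw [c1g] at h3
          rw [← h3]; exact h1
        have c2g : U2 (-(n : ℝ)) (U2 (n : ℝ) (U1 (n : ℝ) g)) = U1 (n : ℝ) g := by
          have := cancel2 (-(n : ℝ)) (U1 (n : ℝ) g); rwa [neg_neg] at this
        have h4 := ip2 (-(n : ℝ)) f (U2 (n : ℝ) (U1 (n : ℝ) g))
        rw [c2g] at h4
        rw [← h4]; exact h2
      have hOff : ZeroOffQ (U2 (n : ℝ) (U1 (n : ℝ) g)) := (zeroOnQ_inner_iff _).mp hOrtho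
      have hOff' : ∀ᵐ q ∂(volume : Measure (ℝ × ℝ)),
          (q ∉ QQ → (g : ℝ × ℝ → ℂ) (q.1 + n, q.2 + n) = 0) := by
        filter_upwards [hOff, hT2 (n : ℝ) (U1 (n : ℝ) g),
          aeS2 (n : ℝ) (P := fun x y =>
            (U1 (n : ℝ) g : ℝ × ℝ → ℂ) (x, y) = (g : ℝ × ℝ → ℂ) (x + n, y)) (hT1 (n : ℝ) g)]
          with q h1 h2 h3 hq
        rw [← h3, ← h2]; exact h1 hq
      have pull := aeS2 (-(n : ℝ))
        (P := fun x y => ((x + -(n : ℝ), y) ∉ QQ →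
          (g : ℝ × ℝ → ℂ) (x + -(n : ℝ) + n, y + n) = 0))
        (aeS1 (-(n : ℝ)) (P := fun x y => ((x, y) ∉ QQ →
          (g : ℝ × ℝ → ℂ) (x + n, y + n) = 0)) hOff')
      filter_upwards [pull] with p h hm
      have h5 := h hm
      rwa [neg_add_cancel_right, neg_add_cancel_right] at h5
    have hg0 : ⇑g =ᵐ[(volume : Measure (ℝ × ℝ))] (0 : ℝ × ℝ → ℂ) := by
      have hall := ae_all_iff.mpr key
      filter_upwards [hall] with p h
      obtain ⟨n, hn⟩ := exists_nat_gt p.1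
      simp only [Pi.zero_apply]
      exact h n (fun hmem =>
        (not_le.mpr (by linarith : p.1 + -(n : ℝ) < 0)) (mem_QQ_iff.mp hmem).1)
    exact Lp.ext (hg0.trans (Lp.coeFn_zero ℂ 2 (volume : Measure (ℝ × ℝ))).symm)
  -- part (c2)
  have partc2 : ∀ t : ℝ, 0 ≤ t → ∀ g, ZeroOffQ g →
      ZeroOffQ (adjoint (U1 t) g) ∧ ZeroOffQ (adjoint (U2 t) g) ∧
      ((adjoint (U1 t) g : ℝ × ℝ → ℂ) =ᵐ[(volume : Measure (ℝ × ℝ))]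
        fun p => if t ≤ p.1 then (g : ℝ × ℝ → ℂ) (p.1 - t, p.2) else 0) ∧
      ((adjoint (U2 t) g : ℝ × ℝ → ℂ) =ᵐ[(volume : Measure (ℝ × ℝ))]
        fun p => if t ≤ p.2 then (g : ℝ × ℝ → ℂ) (p.1, p.2 - t) else 0) := by
    intro t ht g hg
    rw [adj1 t, adj2 t]
    refine ⟨?_, ?_, ?_, ?_⟩
    · filter_upwards [hT1 (-t) g,
        aeS1 (-t) (P := fun x y => ((x, y) ∉ QQ → (g : ℝ × ℝ → ℂ) (x, y) = 0)) hg]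
        with p e1 e2 hp
      rw [e1]
      refine e2 (fun hmem => hp (mem_QQ_iff.mpr ⟨?_, (mem_QQ_iff.mp hmem).2⟩))
      have h1 : (0 : ℝ) ≤ p.1 + -t := (mem_QQ_iff.mp hmem).1
      linarith
    · filter_upwards [hT2 (-t) g,
        aeS2 (-t) (P := fun x y => ((x, y) ∉ QQ → (g : ℝ × ℝ → ℂ) (x, y) = 0)) hg]
        with p e1 e2 hp
      rw [e1]
      refine e2 (fun hmem => hp (mem_QQ_iff.mpr ⟨(mem_QQ_iff.mp hmem).1, ?_⟩))
      have h1 : (0 : ℝ) ≤ p.2 + -t := (mem_QQ_iff.mp hmem).2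
      linarith
    · filter_upwards [hT1 (-t) g,
        aeS1 (-t) (P := fun x y => ((x, y) ∉ QQ → (g : ℝ × ℝ → ℂ) (x, y) = 0)) hg]
        with p e1 e2
      rw [e1]
      by_cases hc : t ≤ p.1
      · rw [if_pos hc, sub_eq_add_neg]
      · rw [if_neg hc]
        refine e2 (fun hmem => absurd ?_ hc)
        have h1 : (0 : ℝ) ≤ p.1 + -t := (mem_QQ_iff.mp hmem).1
        linarith
    · filter_upwards [hT2 (-t) g,
        aeS2 (-t) (P := fun x y => ((x, y) ∉ QQ → (g : ℝ × ℝ → ℂ) (x, y) = 0)) hg]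
        with p e1 e2
      rw [e1]
      by_cases hc : t ≤ p.2
      · rw [if_pos hc, sub_eq_add_neg]
      · rw [if_neg hc]
        refine e2 (fun hmem => absurd ?_ hc)
        have h1 : (0 : ℝ) ≤ p.2 + -t := (mem_QQ_iff.mp hmem).2
        linarith
  -- part (d)
  have partd : ∀ t s : ℝ, 0 ≤ t → 0 ≤ s → ∀ g, ZeroOffQ g →
      ∀ w w' : Lp ℂ 2 (volume : Measure (ℝ × ℝ)), ZeroOffQ w →
        ZeroOnQ (U2 s g - w) → ZeroOffQ w' →
        ZeroOnQ (U2 s (adjoint (U1 t) g) - w') →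
        adjoint (U1 t) w = w' := by
    intro t s ht hs g hg w w' hw hw2 hw' hw2'
    rw [adj1 t] at hw2' ⊢
    have hwOn : ∀ᵐ q ∂(volume : Measure (ℝ × ℝ)),
        (q ∈ QQ → (w : ℝ × ℝ → ℂ) q = (g : ℝ × ℝ → ℂ) (q.1, q.2 + s)) := by
      filter_upwards [hw2, Lp.coeFn_sub (U2 s g) w, hT2 s g] with q h1 h2 h3 hq
      have h5 := h1 hq
      rw [h2, Pi.sub_apply, h3] at h5
      exact (sub_eq_zero.mp h5).symm
    have hw'On : ∀ᵐ q ∂(volume : Measure (ℝ × ℝ)),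
        (q ∈ QQ → (w' : ℝ × ℝ → ℂ) q = (g : ℝ × ℝ → ℂ) (q.1 + -t, q.2 + s)) := by
      filter_upwards [hw2', Lp.coeFn_sub (U2 s (U1 (-t) g)) w', hT2 s (U1 (-t) g),
        aeS2 s (P := fun x y =>
          (U1 (-t) g : ℝ × ℝ → ℂ) (x, y) = (g : ℝ × ℝ → ℂ) (x + -t, y)) (hT1 (-t) g)]
        with q h1 h2 h3 h4 hq
      have h5 := h1 hq
      rw [h2, Pi.sub_apply, h3, h4] at h5
      exact (sub_eq_zero.mp h5).symm
    refine Lp.ext ?_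
    filter_upwards [hT1 (-t) w,
      aeS1 (-t) (P := fun x y => ((x, y) ∉ QQ → (w : ℝ × ℝ → ℂ) (x, y) = 0)) hw,
      aeS1 (-t) (P := fun x y =>
        ((x, y) ∈ QQ → (w : ℝ × ℝ → ℂ) (x, y) = (g : ℝ × ℝ → ℂ) (x, y + s))) hwOn,
      hw', hw'On,
      aeS2 s (P := fun x y => ((x + -t, y) ∉ QQ → (g : ℝ × ℝ → ℂ) (x + -t, y) = 0))
        (aeS1 (-t) (P := fun x y => ((x, y) ∉ QQ → (g : ℝ × ℝ → ℂ) (x, y) = 0)) hg)]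
      with p e1 e2 e3 e4 e5 e6
    rw [e1]
    by_cases hp : p ∈ QQ
    · by_cases h0 : (0 : ℝ) ≤ p.1 + -t
      · rw [e3 (mem_QQ_iff.mpr ⟨h0, (mem_QQ_iff.mp hp).2⟩), e5 hp]
      · rw [e2 (fun hmem => h0 (mem_QQ_iff.mp hmem).1), e5 hp,
          e6 (fun hmem => h0 (mem_QQ_iff.mp hmem).1)]
    · rw [e4 hp]
      refine e2 (fun hmem => hp (mem_QQ_iff.mpr ⟨?_, (mem_QQ_iff.mp hmem).2⟩))
      have h1 : (0 : ℝ) ≤ p.1 + -t := (mem_QQ_iff.mp hmem).1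
      linarith
  exact ⟨parta, ⟨ug1, ug2, comm, hdense⟩, ⟨fun g => zeroOnQ_inner_iff g, partc2⟩, partd⟩
end
end
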